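/- Let ν, γ be real numbers with ν ≥ 1 and γ ≥ 0, and set r = 0. Let σ := !![0, 1; -1, 0], Γ := diag(ν, ν), K := −γ·I + 2γ·Γ⁻¹, and M^Bayes := 2γ·I + i·(K·σ + σ·Kᵀ) as a 2×2 complex matrix. Then M^Bayes is positive semidefinite; i.e., for unsqueezed thermal references the CP obstruction never activates. -/

import Mathlib

/-!
For a thermal reference `Γ = ν • 1` the drift `K = (2γ/ν - γ) • 1` is scalar, so
`M^Bayes = 2γ • 1 + 2(2γ/ν - γ) • (i σ)`. The matrix `i σ` is a Hermitian involution, hence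
`a • 1 + b • (i σ)` splits along the orthogonal projections `(1 ± i σ)/2` with weights `a ± b`,
and is positive semidefinite as soon as `|b| ≤ a`. Here that is `0 ≤ 2γ/ν ≤ 2γ`, i.e. `ν ≥ 1`.
-/

open Matrix Complex
open scoped ComplexOrder

/-- The one-mode symplectic form in HHW conventions, as a complex matrix. -/
noncomputable def symp : Matrix (Fin 2) (Fin 2) ℂ := !![0, 1; -1, 0]

/-- Thermal reference covariance `diag(ν, ν)` (the `r = 0` squeezed-thermal covariance). -/
noncomputable def GamThermal (ν : ℝ) : Matrix (Fin 2) (Fin 2) ℂ :=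
  Matrix.diagonal ![((ν : ℝ) : ℂ), ((ν : ℝ) : ℂ)]

/-- Bayes reverse drift `K = -γ I + 2γ Γ⁻¹` at `r = 0`. -/
noncomputable def KbayesThermal (ν γ : ℝ) : Matrix (Fin 2) (Fin 2) ℂ :=
  (-(γ : ℂ)) • (1 : Matrix (Fin 2) (Fin 2) ℂ) + ((2 * γ : ℝ) : ℂ) • (GamThermal ν)⁻¹

/-- Generator CP matrix `M^Bayes = 2γ I + i (K σ + σ Kᵀ)` at `r = 0`. -/
noncomputable def MBayesThermal (ν γ : ℝ) : Matrix (Fin 2) (Fin 2) ℂ :=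
  ((2 * γ : ℝ) : ℂ) • (1 : Matrix (Fin 2) (Fin 2) ℂ) +
    Complex.I • (KbayesThermal ν γ * symp + symp * (KbayesThermal ν γ)ᵀ)

namespace Matrix

variable {𝕜 n : Type*} [RCLike 𝕜] [Fintype n] [DecidableEq n]

theorem PosSemidef.one_add_of_mul_self_eq_one {Y : Matrix n n 𝕜} (hY : Y.IsHermitian)
    (hYY : Y * Y = 1) : (1 + Y).PosSemidef := by
  have hsq : (1 + Y)ᴴ * (1 + Y) = (2 : ℝ) • (1 + Y) := by
    rw [conjTranspose_add, conjTranspose_one, hY.eq, add_mul, mul_add, mul_add, hYY, two_smul]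
    simp only [mul_one, one_mul]
    abel
  have hgram : 1 + Y = (2⁻¹ : ℝ) • ((1 + Y)ᴴ * (1 + Y)) := by
    rw [hsq, smul_smul]
    norm_num
  rw [hgram]
  exact (posSemidef_conjTranspose_mul_self _).smul (by norm_num)

theorem posSemidef_smul_one_add_smul_of_mul_self_eq_one {Y : Matrix n n 𝕜} (hY : Y.IsHermitian)
    (hYY : Y * Y = 1) {a b : ℝ} (hab : |b| ≤ a) :
    ((a : 𝕜) • (1 : Matrix n n 𝕜) + (b : 𝕜) • Y).PosSemidef := by
  obtain ⟨hneg_le, hle⟩ := abs_le.mp hab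
  have hsplit : (a : 𝕜) • (1 : Matrix n n 𝕜) + (b : 𝕜) • Y =
      ((a + b) / 2 : ℝ) • (1 + Y) + ((a - b) / 2 : ℝ) • (1 + -Y) := by
    simp only [RCLike.real_smul_eq_coe_smul (K := 𝕜)]
    push_cast
    module
  rw [hsplit]
  exact ((PosSemidef.one_add_of_mul_self_eq_one hY hYY).smul (by linarith)).add
    ((PosSemidef.one_add_of_mul_self_eq_one hY.neg (by rw [neg_mul_neg, hYY])).smul
      (by linarith))

end Matrix

theorem GamThermal_inv (ν : ℝ) : (GamThermal ν)⁻¹ = ((ν : ℂ)⁻¹) • 1 := by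
  -- at `ν = 0` both sides are `0`, as `0⁻¹ = 0` for matrices and scalars alike
  rcases eq_or_ne ν 0 with rfl | hν
  · rw [GamThermal, show ![((0 : ℝ) : ℂ), ((0 : ℝ) : ℂ)] = 0 by simp]
    simp
  · apply inv_eq_right_inv
    ext i j
    fin_cases i <;> fin_cases j <;> simp [GamThermal, hν]

theorem KbayesThermal_eq (ν γ : ℝ) :
    KbayesThermal ν γ = ((2 * γ / ν - γ : ℝ) : ℂ) • 1 := by
  rw [KbayesThermal, GamThermal_inv, smul_smul, ← add_smul]
  push_cast
  ring_nf

theorem MBayesThermal_eq (ν γ : ℝ) :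
    MBayesThermal ν γ =
      ((2 * γ : ℝ) : ℂ) • 1 + ((2 * (2 * γ / ν - γ) : ℝ) : ℂ) • (Complex.I • symp) := by
  rw [MBayesThermal, KbayesThermal_eq, transpose_smul, transpose_one, Matrix.smul_mul,
    Matrix.mul_smul, one_mul, mul_one]
  push_cast
  module

theorem isHermitian_I_smul_symp : (Complex.I • symp).IsHermitian := by
  ext i j
  fin_cases i <;> fin_cases j <;> simp [symp]

theorem I_smul_symp_mul_self : (Complex.I • symp) * (Complex.I • symp) = 1 := by
  ext i j
  fin_cases i <;> fin_cases j <;> simp [symp]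

/-- For unsqueezed thermal references (`r = 0`, `ν ≥ 1`, `γ ≥ 0`) the Bayes reverse
generator CP matrix is positive semidefinite: the CP obstruction never activates. -/
theorem MBayesThermal_posSemidef (ν γ : ℝ) (hν : 1 ≤ ν) (hγ : 0 ≤ γ) :
    (MBayesThermal ν γ).PosSemidef := by
  have hdiv : 2 * γ / ν ≤ 2 * γ := div_le_self (by positivity) hν
  have hdiv_nonneg : 0 ≤ 2 * γ / ν := div_nonneg (by positivity) (by linarith)
  have hcoef : |2 * (2 * γ / ν - γ)| ≤ 2 * γ := abs_le.mpr ⟨by linarith, by linarith⟩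
  rw [MBayesThermal_eq]
  exact posSemidef_smul_one_add_smul_of_mul_self_eq_one isHermitian_I_smul_symp
    I_smul_symp_mul_self hcoef
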